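/- arXiv:2604.03170 — 2 statements merged into one kernel-verified Lean document; each statement's English description precedes it below -/
import Mathlib

section
/- Let t₀ = √(2 log 2), B = t₀/2 + ∫_{t₀}^∞ e^{-t²/2} dt, H(x) = 2x e^{-x²/2} + 2∫_x^∞ e^{-t²/2} dt, and let a > t₀ be the unique solution of H(a) = B. Let p₀ = 2e^{-a²/2}, let z satisfy Φ̄(z) = p₀, and let c₀ = B/φ(z). Then a > √(2 log 4) (in particular a > √2), p₀ < 1/2 (so z > 0), and c₀ > √2. -/
open MeasureTheory Real Set

/-- The standard normal density `φ(x) = (2π)^{-1/2} e^{-x²/2}`. -/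
noncomputable def stdNormalPDF (x : ℝ) : ℝ :=
  (Real.sqrt (2 * Real.pi))⁻¹ * Real.exp (-x ^ 2 / 2)

/-- The Gaussian tail `Φ̄(x) = ∫_x^∞ φ(t) dt`. -/
noncomputable def gaussTail (x : ℝ) : ℝ := ∫ t in Set.Ioi x, stdNormalPDF t

/-- `B = t₀/2 + ∫_{t₀}^∞ e^{-t²/2} dt` with `t₀ = √(2 log 2)`. -/
noncomputable def Bconst : ℝ :=
  Real.sqrt (2 * Real.log 2) / 2 +
    ∫ t in Set.Ioi (Real.sqrt (2 * Real.log 2)), Real.exp (-t ^ 2 / 2)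

/-- `H(x) = 2x e^{-x²/2} + 2 ∫_x^∞ e^{-t²/2} dt`. -/
noncomputable def Hfun (x : ℝ) : ℝ :=
  2 * x * Real.exp (-x ^ 2 / 2) + 2 * ∫ t in Set.Ioi x, Real.exp (-t ^ 2 / 2)

/-!
If `a ≤ √(2 log 4)` then `e^{-a²/2} ≥ 1/4`, and bounding `e^{-t²/2} ≤ 1/2` on `[t₀, a]` gives
`B ≤ a/2 + ∫_a^∞ e^{-t²/2} < H(a)`, a contradiction. Then `p₀ < 2 · 1/4`; since `Φ̄` is
decreasing with `Φ̄(0) = 1/2`, `z > 0`; and since `φ ≤ (2π)^{-1/2}`,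
`c₀ ≥ B √(2π) > t₀ √(2π) / 2 = √(π log 2) > √2`.
-/

lemma integrable_exp_neg_sq_div_two : Integrable fun t : ℝ => exp (-t ^ 2 / 2) := by
  refine (integrable_exp_neg_mul_sq (b := 1 / 2) (by norm_num)).congr
    (Filter.Eventually.of_forall fun t => ?_)
  ring_nf

lemma setIntegral_Ioi_exp_neg_sq_div_two_pos (x : ℝ) :
    0 < ∫ t in Ioi x, exp (-t ^ 2 / 2) := by
  rw [setIntegral_pos_iff_support_of_nonneg_ae
    (Filter.Eventually.of_forall fun t => (exp_pos _).le)
    integrable_exp_neg_sq_div_two.integrableOn]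
  simp [Function.support, exp_ne_zero]

lemma exp_neg_sq_div_two_le_of_le {x y : ℝ} (hx : 0 ≤ x) (hxy : x ≤ y) :
    exp (-y ^ 2 / 2) ≤ exp (-x ^ 2 / 2) := by
  gcongr

lemma exp_neg_sq_div_two_lt_of_lt {x y : ℝ} (hx : 0 ≤ x) (hxy : x < y) :
    exp (-y ^ 2 / 2) < exp (-x ^ 2 / 2) := by
  gcongr

lemma setIntegral_Ioi_exp_neg_sq_div_two_le {x y : ℝ} (hx : 0 ≤ x) (hxy : x ≤ y) :
    ∫ t in Ioi x, exp (-t ^ 2 / 2) ≤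
      (y - x) * exp (-x ^ 2 / 2) + ∫ t in Ioi y, exp (-t ^ 2 / 2) := by
  have hint := integrable_exp_neg_sq_div_two
  rw [← Ioc_union_Ioi_eq_Ioi hxy,
    setIntegral_union (Ioc_disjoint_Ioi le_rfl) measurableSet_Ioi hint.integrableOn
      hint.integrableOn]
  gcongr
  calc ∫ t in Ioc x y, exp (-t ^ 2 / 2)
      ≤ ∫ _ in Ioc x y, exp (-x ^ 2 / 2) :=
        setIntegral_mono_on hint.integrableOn (integrableOn_const measure_Ioc_lt_top.ne)
          measurableSet_Ioc fun t ht => exp_neg_sq_div_two_le_of_le hx ht.1.le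
    _ = (y - x) * exp (-x ^ 2 / 2) := by
        rw [setIntegral_const, volume_real_Ioc_of_le hxy, smul_eq_mul]

lemma exp_neg_sqrt_two_mul_log_sq_div_two {b : ℝ} (hb : 1 ≤ b) :
    exp (-sqrt (2 * log b) ^ 2 / 2) = b⁻¹ := by
  have hlog : 0 ≤ log b := log_nonneg hb
  rw [sq_sqrt (by positivity), show -(2 * log b) / 2 = -log b by ring, exp_neg,
    exp_log (by linarith)]

lemma sqrt_two_mul_log_four_lt_of_Hfun_eq {a : ℝ} (ha : sqrt (2 * log 2) < a)
    (hHa : Hfun a = Bconst) : sqrt (2 * log 4) < a := by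
  set t₀ := sqrt (2 * log 2)
  by_contra! has
  have ht₀ : exp (-t₀ ^ 2 / 2) = 1 / 2 := by
    rw [exp_neg_sqrt_two_mul_log_sq_div_two (by norm_num), one_div]
  have hexp_a : 1 / 4 ≤ exp (-a ^ 2 / 2) := by
    rw [← inv_eq_one_div, ← exp_neg_sqrt_two_mul_log_sq_div_two (by norm_num)]
    exact exp_neg_sq_div_two_le_of_le ((sqrt_nonneg _).trans ha.le) has
  have hsplit := setIntegral_Ioi_exp_neg_sq_div_two_le (sqrt_nonneg _) ha.le
  rw [ht₀] at hsplit
  have htail := setIntegral_Ioi_exp_neg_sq_div_two_pos a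
  have hapos : 0 < a := (sqrt_nonneg _).trans_lt ha
  have : Bconst < Hfun a := by
    rw [Hfun, Bconst]
    nlinarith
  exact this.ne' hHa

lemma gaussTail_antitone : Antitone gaussTail := by
  intro x y hxy
  have hint : Integrable stdNormalPDF := integrable_exp_neg_sq_div_two.const_mul _
  exact setIntegral_mono_set hint.integrableOn
    (Filter.Eventually.of_forall fun t => by unfold stdNormalPDF; positivity)
    (Ioi_subset_Ioi hxy).eventuallyLE

lemma gaussTail_zero : gaussTail 0 = 1 / 2 := by
  have hhalf : ∫ t in Ioi (0 : ℝ), exp (-t ^ 2 / 2) = sqrt (2 * π) / 2 := by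
    have h := integral_gaussian_Ioi (1 / 2)
    rw [show π / (1 / 2) = 2 * π by ring] at h
    rw [← h]
    exact setIntegral_congr_fun measurableSet_Ioi fun t _ => by ring_nf
  have hpos : 0 < sqrt (2 * π) := sqrt_pos.mpr (by positivity)
  rw [gaussTail]
  simp only [stdNormalPDF]
  rw [integral_const_mul, hhalf]
  field_simp

lemma stdNormalPDF_pos (x : ℝ) : 0 < stdNormalPDF x := by
  unfold stdNormalPDF; positivity

lemma stdNormalPDF_le (x : ℝ) : stdNormalPDF x ≤ (sqrt (2 * π))⁻¹ := by
  unfold stdNormalPDF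
  refine mul_le_of_le_one_right (by positivity) (exp_le_one_iff.mpr ?_)
  nlinarith [sq_nonneg x]

lemma two_lt_pi_mul_log_two : 2 < π * log 2 := by
  have h := mul_lt_mul'' pi_gt_d6 log_two_gt_d9 (by norm_num) (by norm_num)
  norm_num at h ⊢
  linarith

lemma sqrt_two_lt_sqrt_two_mul_log_two_div_two_mul_sqrt_two_pi :
    sqrt 2 < sqrt (2 * log 2) / 2 * sqrt (2 * π) := by
  have hsq : sqrt (2 * log 2) / 2 * sqrt (2 * π) = sqrt (π * log 2) := by
    rw [div_mul_eq_mul_div, ← sqrt_mul (by positivity),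
      show 2 * log 2 * (2 * π) = 2 ^ 2 * (π * log 2) by ring,
      sqrt_mul (by positivity), sqrt_sq (by norm_num)]
    ring
  rw [hsq]
  exact sqrt_lt_sqrt (by norm_num) two_lt_pi_mul_log_two

/-- Crude bounds on the sub-Gaussian comparison parameters: with `a > t₀ = √(2 log 2)` the
solution of `H(a) = B`, `p₀ = 2e^{-a²/2}`, `Φ̄(z) = p₀` and `c₀ = B/φ(z)`, one has
`a > √(2 log 4)` (in particular `a > √2`), `p₀ < 1/2` (so `z > 0`), and `c₀ > √2`. -/
theorem stmt9
    (a z c₀ : ℝ)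
    (ha : Real.sqrt (2 * Real.log 2) < a) (hHa : Hfun a = Bconst)
    (hz : gaussTail z = 2 * Real.exp (-a ^ 2 / 2))
    (hc₀ : c₀ = Bconst / stdNormalPDF z) :
    Real.sqrt (2 * Real.log 4) < a ∧ Real.sqrt 2 < a ∧
      2 * Real.exp (-a ^ 2 / 2) < 1 / 2 ∧ 0 < z ∧ Real.sqrt 2 < c₀ := by
  have hsa := sqrt_two_mul_log_four_lt_of_Hfun_eq ha hHa
  have hsqrt2 : sqrt 2 < sqrt (2 * log 4) := by
    have : 1 < log 4 := by
      rw [lt_log_iff_exp_lt (by norm_num)]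
      linarith [exp_one_lt_d9]
    exact sqrt_lt_sqrt (by norm_num) (by linarith)
  have hp : 2 * exp (-a ^ 2 / 2) < 1 / 2 := by
    have := exp_neg_sq_div_two_lt_of_lt (sqrt_nonneg _) hsa
    rw [exp_neg_sqrt_two_mul_log_sq_div_two (by norm_num)] at this
    linarith
  have hzpos : 0 < z := by
    by_contra! hz0
    linarith [gaussTail_antitone hz0, gaussTail_zero]
  have hB : sqrt (2 * log 2) / 2 < Bconst := by
    rw [Bconst]
    linarith [setIntegral_Ioi_exp_neg_sq_div_two_pos (sqrt (2 * log 2))]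
  have hc : Bconst * sqrt (2 * π) ≤ c₀ := by
    rw [hc₀, ← div_inv_eq_mul]
    exact div_le_div_of_nonneg_left (by linarith [sqrt_nonneg (2 * log 2)])
      (stdNormalPDF_pos z) (stdNormalPDF_le z)
  have hBc : sqrt (2 * log 2) / 2 * sqrt (2 * π) < Bconst * sqrt (2 * π) :=
    mul_lt_mul_of_pos_right hB (sqrt_pos.mpr (by positivity))
  exact ⟨hsa, hsqrt2.trans hsa, hp, hzpos,
    by linarith [sqrt_two_lt_sqrt_two_mul_log_two_div_two_mul_sqrt_two_pi]⟩
end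

section
/- Let c₀ be the sharp sub-Gaussian comparison constant, G standard normal, and g_{c₀}(u) = E[(c₀·G − u)₊]. Then g_{c₀}(u) ≥ B − p₀·u for all u ∈ ℝ, where B and p₀ are the sub-Gaussian envelope parameters. -/
/-! For every `z` and `c`, `E[(cG − u)₊] ≥ E[(cG − u) 1_{G > z}] = c φ(z) − u Φ̄(z)`;
with `c = c₀ = B / φ(z)` and `Φ̄(z) = p₀` the right-hand side is `B − p₀ u`. The only
Gaussian computation behind it is `∫_z^∞ x φ(x) dx = φ(z)`, since `φ' = −x φ`. -/

open MeasureTheory ProbabilityTheory Real Set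

lemma gaussianPDFReal_zero_one : gaussianPDFReal 0 1 = stdNormalPDF := by
  ext x
  simp [gaussianPDFReal, stdNormalPDF]

lemma setIntegral_gaussianReal_zero_one {s : Set ℝ} (hs : MeasurableSet s) (f : ℝ → ℝ) :
    ∫ x in s, f x ∂gaussianReal 0 1 = ∫ x in s, stdNormalPDF x * f x := by
  rw [← integral_indicator hs, integral_gaussianReal_eq_integral_smul one_ne_zero,
    ← integral_indicator hs, gaussianPDFReal_zero_one]
  congr 1 with x
  by_cases hx : x ∈ s <;> simp [hx]

lemma gaussianReal_zero_one_real_Ioi (z : ℝ) : (gaussianReal 0 1).real (Ioi z) = gaussTail z := by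
  simpa [gaussTail] using setIntegral_gaussianReal_zero_one (s := Ioi z) measurableSet_Ioi 1

lemma integrable_mul_stdNormalPDF : Integrable fun x => x * stdNormalPDF x := by
  refine ((integrable_mul_exp_neg_mul_sq (by norm_num : (0 : ℝ) < 1 / 2)).const_mul
    (√(2 * π))⁻¹).congr (.of_forall fun x => ?_)
  simp only [stdNormalPDF]
  ring_nf

lemma hasDerivAt_neg_stdNormalPDF (x : ℝ) :
    HasDerivAt (fun y => -stdNormalPDF y) (x * stdNormalPDF x) x := by
  have hexp : HasDerivAt (fun y : ℝ => -y ^ 2 / 2) (-x) x :=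
    ((hasDerivAt_pow 2 x).neg.div_const 2).congr_deriv (by push_cast; ring)
  refine (hexp.exp.const_mul (√(2 * π))⁻¹).neg.congr_deriv ?_
  simp only [stdNormalPDF]
  ring

lemma tendsto_stdNormalPDF_atTop : Filter.Tendsto stdNormalPDF Filter.atTop (nhds 0) := by
  have hsq : Filter.Tendsto (fun x : ℝ => x ^ 2 / 2) Filter.atTop Filter.atTop :=
    (Filter.tendsto_pow_atTop two_ne_zero).atTop_div_const (by norm_num)
  show Filter.Tendsto (fun x => stdNormalPDF x) _ _
  simpa only [stdNormalPDF, neg_div, mul_zero, Function.comp_def] using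
    (tendsto_exp_neg_atTop_nhds_zero.comp hsq).const_mul (√(2 * π))⁻¹

lemma integral_Ioi_mul_stdNormalPDF (z : ℝ) :
    ∫ x in Ioi z, x * stdNormalPDF x = stdNormalPDF z := by
  simpa using integral_Ioi_of_hasDerivAt_of_tendsto' (fun x _ => hasDerivAt_neg_stdNormalPDF x)
    integrable_mul_stdNormalPDF.integrableOn tendsto_stdNormalPDF_atTop.neg

lemma integrable_affine_gaussianReal (μ : ℝ) (v : NNReal) (c u : ℝ) :
    Integrable (fun x => c * x - u) (gaussianReal μ v) :=
  (((memLp_id_gaussianReal 1).integrable le_rfl).const_mul c).sub (integrable_const u)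

lemma setIntegral_Ioi_affine_gaussianReal (c u z : ℝ) :
    ∫ x in Ioi z, (c * x - u) ∂gaussianReal 0 1 = c * stdNormalPDF z - u * gaussTail z := by
  have hid : IntegrableOn (fun x => x) (Ioi z) (gaussianReal 0 1) :=
    ((memLp_id_gaussianReal 1).integrable le_rfl).integrableOn
  rw [integral_sub (hid.const_mul c) (integrable_const u), integral_const_mul, setIntegral_const,
    smul_eq_mul, gaussianReal_zero_one_real_Ioi,
    setIntegral_gaussianReal_zero_one measurableSet_Ioi fun x => x]
  simp only [mul_comm (stdNormalPDF _), integral_Ioi_mul_stdNormalPDF]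
  ring

lemma setIntegral_le_integral_max_zero {α : Type*} [MeasurableSpace α] {μ : Measure α}
    {f : α → ℝ} (hf : Integrable f μ) (s : Set α) :
    ∫ x in s, f x ∂μ ≤ ∫ x, max (f x) 0 ∂μ := by
  have hpos : Integrable (fun x => max (f x) 0) μ := hf.pos_part
  calc ∫ x in s, f x ∂μ ≤ ∫ x in s, max (f x) 0 ∂μ :=
        setIntegral_mono hf.integrableOn hpos.integrableOn fun x => le_max_left _ _
    _ ≤ ∫ x, max (f x) 0 ∂μ :=
        setIntegral_le_integral hpos (.of_forall fun x => le_max_right _ _)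

theorem stmt12_general
    (a z c₀ : ℝ)
    (hz : gaussTail z = 2 * Real.exp (-a ^ 2 / 2))
    (hc₀ : c₀ = Bconst / stdNormalPDF z) :
    ∀ u : ℝ, Bconst - 2 * Real.exp (-a ^ 2 / 2) * u ≤
      ∫ x, max (c₀ * x - u) 0 ∂(gaussianReal 0 1) := by
  intro u
  have hB : c₀ * stdNormalPDF z = Bconst := by
    rw [hc₀, div_mul_cancel₀ _ (by unfold stdNormalPDF; positivity)]
  calc Bconst - 2 * Real.exp (-a ^ 2 / 2) * u = c₀ * stdNormalPDF z - u * gaussTail z := by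
        rw [hB, hz]; ring
    _ = ∫ x in Ioi z, (c₀ * x - u) ∂gaussianReal 0 1 :=
        (setIntegral_Ioi_affine_gaussianReal ..).symm
    _ ≤ _ := setIntegral_le_integral_max_zero (integrable_affine_gaussianReal 0 1 c₀ u) _

/-- Tangent-line lower bound for the Gaussian stop-loss: with `c₀` the sharp sub-Gaussian
comparison constant and `G` standard normal, `g_{c₀}(u) = E[(c₀G − u)₊] ≥ B − p₀ u` for all
`u ∈ ℝ`, where `B` and `p₀ = 2e^{-a²/2}` are the sub-Gaussian envelope parameters. -/
theorem stmt12
    (a z c₀ : ℝ)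
    (ha : Real.sqrt (2 * Real.log 2) < a) (hHa : Hfun a = Bconst)
    (hz : gaussTail z = 2 * Real.exp (-a ^ 2 / 2))
    (hc₀ : c₀ = Bconst / stdNormalPDF z) :
    ∀ u : ℝ, Bconst - 2 * Real.exp (-a ^ 2 / 2) * u ≤
      ∫ x, max (c₀ * x - u) 0 ∂(gaussianReal 0 1) :=
  stmt12_general a z c₀ hz hc₀
end
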